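/- arXiv:1709.07966 — 2 statements merged into one kernel-verified Lean document; each statement's English description precedes it below -/
import Mathlib

section
/- (SoS certificates over the Boolean hypercube.) Let F = {x ∈ {0,1}^n : g_j(x) ≥ 0 for j=1,...,m} for polynomials g_1,...,g_m, and suppose that for every z ∈ {0,1}^n \ F there exists some j with g_j(z) < 0 (i.e. F is exactly the set of hypercube points satisfying all constraints). Then every polynomial p nonnegative on F can be written as p = s_0 + ∑_{j=1}^m s_j · g_j + h, where each s_j is a sum of squares of polynomials and h ∈ I_01. -/
open MvPolynomial Finset

noncomputable def I01 (n : ℕ) : Ideal (MvPolynomial (Fin n) ℝ) :=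
  Ideal.span (Set.range fun i : Fin n => X i ^ 2 - X i)

/-- `p` is a sum of squares of polynomials. -/
def IsSOS {n : ℕ} (p : MvPolynomial (Fin n) ℝ) : Prop :=
  ∃ (r : ℕ) (q : Fin r → MvPolynomial (Fin n) ℝ), p = ∑ k, (q k) ^ 2

/-!
At a point `z` of the cube, nonnegativity of `p` on `F` yields reals `c₀, c_j ≥ 0` with
`p(z) = c₀ + ∑ c_j g_j(z)`: if `p(z) < 0` then `z ∉ F`, so some `g_j(z) < 0` and one multiplier
suffices. Every nonnegative function `c` on the cube is the restriction of the sum of squares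
`∑_σ (√c(σ) δ_σ)²`, where `δ_σ` are the indicator polynomials of the cube points. Hence
`p - s₀ - ∑ s_j g_j` vanishes on the cube, and by the Combinatorial Nullstellensatz it lies in
the ideal generated by the `X_i² - X_i`.
-/

def booleanCube (σ R : Type*) [Zero R] [One R] : Set (σ → R) :=
  {x | ∀ i, x i = 0 ∨ x i = 1}

theorem mem_span_X_sq_sub_X_of_eval_eq_zero {σ R : Type*} [Finite σ] [CommRing R] [IsDomain R]
    {q : MvPolynomial σ R} (hq : ∀ x ∈ booleanCube σ R, eval x q = 0) :
    q ∈ Ideal.span (Set.range fun i : σ => X i ^ 2 - X i) := by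
  classical
  obtain ⟨c, -, rfl⟩ := combinatorial_nullstellensatz_exists_linearCombination
    (fun _ => {0, 1}) (fun _ => insert_nonempty _ _) q (by simpa [booleanCube] using hq)
  have hP : (fun i : σ => ∏ r ∈ ({0, 1} : Finset R), (X i - C r)) = fun i => X i ^ 2 - X i := by
    ext1 i
    rw [prod_pair zero_ne_one]
    simp only [map_zero, map_one, sub_zero]
    ring
  rw [hP]
  exact (Finsupp.range_linearCombination _).le (LinearMap.mem_range_self _ c)

section Interpolation

variable {n : ℕ}

def cubePoint (σ : Fin n → Bool) : Fin n → ℝ := fun i => if σ i then 1 else 0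

theorem exists_cubePoint_eq {z : Fin n → ℝ} (hz : z ∈ booleanCube (Fin n) ℝ) :
    ∃ τ, cubePoint τ = z := by
  refine ⟨fun i => decide (z i = 1), funext fun i => ?_⟩
  rcases hz i with h | h <;> simp [cubePoint, h]

noncomputable def cubeIndicator (σ : Fin n → Bool) : MvPolynomial (Fin n) ℝ :=
  ∏ i, if σ i then X i else 1 - X i

theorem eval_cubePoint_cubeIndicator (σ τ : Fin n → Bool) :
    eval (cubePoint τ) (cubeIndicator σ) = if σ = τ then 1 else 0 := by
  have factor : ∀ i, eval (cubePoint τ) (if σ i then X i else 1 - X i) =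
      if σ i = τ i then 1 else 0 := fun i => by
    cases σ i <;> cases hτ : τ i <;> simp [cubePoint, hτ]
  simp [cubeIndicator, factor, Fintype.prod_boole, _root_.funext_iff]

theorem isSOS_sum_sq {ι : Type*} [Fintype ι] (f : ι → MvPolynomial (Fin n) ℝ) :
    IsSOS (∑ i, f i ^ 2) :=
  ⟨Fintype.card ι, f ∘ (Fintype.equivFin ι).symm,
    (Equiv.sum_comp (Fintype.equivFin ι).symm (fun i => f i ^ 2)).symm⟩

theorem exists_isSOS_eval_eq_on_booleanCube (c : (Fin n → ℝ) → ℝ)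
    (hc : ∀ z ∈ booleanCube (Fin n) ℝ, 0 ≤ c z) :
    ∃ s, IsSOS s ∧ ∀ z ∈ booleanCube (Fin n) ℝ, eval z s = c z := by
  refine ⟨∑ σ, (C √(c (cubePoint σ)) * cubeIndicator σ) ^ 2, isSOS_sum_sq _, ?_⟩
  rintro z hz
  obtain ⟨τ, rfl⟩ := exists_cubePoint_eq hz
  simp [eval_cubePoint_cubeIndicator, Real.sq_sqrt (hc _ hz)]

end Interpolation

theorem exists_nonneg_combination {K ι : Type*} [Field K] [LinearOrder K] [IsStrictOrderedRing K]
    [Fintype ι] (a : K) (b : ι → K) (h : (∀ j, 0 ≤ b j) → 0 ≤ a) :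
    ∃ (c₀ : K) (c : ι → K), 0 ≤ c₀ ∧ (∀ j, 0 ≤ c j) ∧ a = c₀ + ∑ j, c j * b j := by
  classical
  by_cases ha : 0 ≤ a
  · exact ⟨a, 0, ha, fun _ => le_rfl, by simp⟩
  obtain ⟨j₀, hj₀⟩ : ∃ j₀, b j₀ < 0 := by
    by_contra! hb
    exact ha (h hb)
  refine ⟨0, Pi.single j₀ (a / b j₀), le_rfl, fun j => ?_, ?_⟩
  · rcases eq_or_ne j j₀ with rfl | hj
    · simpa using div_nonneg_of_nonpos (not_le.mp ha).le hj₀.le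
    · simp [hj]
  · simp [Pi.single_apply, hj₀.ne]

theorem sos_certificate_over_cube (n m : ℕ) (g : Fin m → MvPolynomial (Fin n) ℝ)
    (F : Set (Fin n → ℝ))
    (hF : F = {z : Fin n → ℝ | (∀ i, z i = 0 ∨ z i = 1) ∧ ∀ j, 0 ≤ eval z (g j)})
    (p : MvPolynomial (Fin n) ℝ) (hp : ∀ z ∈ F, 0 ≤ eval z p) :
    ∃ (s₀ : MvPolynomial (Fin n) ℝ) (s : Fin m → MvPolynomial (Fin n) ℝ)
      (h : MvPolynomial (Fin n) ℝ),
      IsSOS s₀ ∧ (∀ j, IsSOS (s j)) ∧ h ∈ I01 n ∧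
      p = s₀ + ∑ j, s j * g j + h := by
  subst hF
  have pointwise (z : Fin n → ℝ) (hz : z ∈ booleanCube (Fin n) ℝ) := exists_nonneg_combination
    (eval z p) (fun j => eval z (g j)) fun hg => hp z ⟨hz, hg⟩
  choose! c₀ c hc₀ hc hpc using pointwise
  obtain ⟨s₀, hs₀, hs₀_eval⟩ := exists_isSOS_eval_eq_on_booleanCube c₀ hc₀
  choose s hs hs_eval using fun j =>
    exists_isSOS_eval_eq_on_booleanCube (c · j) fun z hz => hc z hz j
  refine ⟨s₀, s, p - (s₀ + ∑ j, s j * g j), hs₀, hs, ?_, by ring⟩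
  refine mem_span_X_sq_sub_X_of_eval_eq_zero fun z hz => ?_
  simp only [map_sub, map_add, map_sum, map_mul, hs₀_eval z hz, hs_eval _ z hz, hpc z hz, sub_self]
end

section
/- (Explicit certificate for the full-circulant pitch-2 inequality.) Let n ≥ 3, V := {3,...,n}, g_i(x) := ∑_{j∈[n], j≠i} x_j - 1 for i ∈ [n]. Then the polynomial identity ∑_{j=1}^n x_j - 2 ≡ δ_∅^V·(g_1 + g_2) + ∑_{i∈V} δ_{\{i\}}^V · g_i + ∑_{k=2}^{n} (∑_{I⊆V, |I|=k} δ_I^V)·(x_1 + x_2 + (k-2)) holds modulo the ideal I_01. -/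
/-!
Modulo `x_i² - x_i` every polynomial agrees with its multilinear interpolant
`∑_S p(𝟙_S) δ_S^{[n]}`, so a polynomial lies in `I01` as soon as it vanishes on `{0,1}ⁿ`.
At the Boolean point `𝟙_S`, `δ_I^V` is the indicator of `V ∩ S = I`; hence exactly one term of
the certificate survives, selected by `|V ∩ S| ∈ {0, 1, ≥ 2}`, and in each case it equals
`x_1 + x_2 + |V ∩ S| - 2 = ∑ x_j - 2`.
-/

open MvPolynomial Finset

noncomputable def delta (n : ℕ) (Z I : Finset (Fin n)) : MvPolynomial (Fin n) ℝ :=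
  (∏ i ∈ I, X i) * ∏ j ∈ Z \ I, (1 - X j)

section BooleanIdeal

variable {σ R : Type*} [CommRing R]

variable (σ R) in
noncomputable def booleanIdeal : Ideal (MvPolynomial σ R) :=
  Ideal.span (Set.range fun i : σ => X i ^ 2 - X i)

theorem X_sq_sub_X_mem_booleanIdeal (i : σ) :
    (X i ^ 2 - X i : MvPolynomial σ R) ∈ booleanIdeal σ R :=
  Ideal.subset_span ⟨i, rfl⟩

variable [DecidableEq σ]

def boolPoint (S : Finset σ) (i : σ) : R := if i ∈ S then 1 else 0

theorem sum_boolPoint (s S : Finset σ) : ∑ i ∈ s, boolPoint (R := R) S i = #(s ∩ S) := by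
  simp only [boolPoint]
  rw [sum_boole, filter_mem_eq_inter]

variable [Fintype σ]

noncomputable def boolIndicator (S : Finset σ) : MvPolynomial σ R :=
  (∏ i ∈ S, X i) * ∏ j ∈ univ \ S, (1 - X j)

theorem sum_boolIndicator : ∑ S : Finset σ, boolIndicator (R := R) S = 1 := by
  have h := prod_add (fun i => (X i : MvPolynomial σ R)) (fun i => 1 - X i) univ
  simpa [boolIndicator] using h.symm

theorem mk_X_mul_boolIndicator (S : Finset σ) (i : σ) :
    Ideal.Quotient.mk (booleanIdeal σ R) (X i * boolIndicator S) =
      Ideal.Quotient.mk (booleanIdeal σ R) (C (boolPoint S i) * boolIndicator S) := by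
  rw [Ideal.Quotient.eq]
  have hi := X_sq_sub_X_mem_booleanIdeal (R := R) i
  by_cases hiS : i ∈ S
  · rw [boolIndicator, ← mul_prod_erase S _ hiS, boolPoint, if_pos hiS, C_1]
    convert Ideal.mul_mem_right ((∏ j ∈ S.erase i, X j) * ∏ j ∈ univ \ S, (1 - X j)) _ hi
      using 1
    ring
  · rw [boolIndicator, ← mul_prod_erase (univ \ S) _ (by simpa using hiS), boolPoint, if_neg hiS,
      C_0]
    convert Ideal.mul_mem_right (-(∏ j ∈ S, X j) * ∏ j ∈ (univ \ S).erase i, (1 - X j)) _ hi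
      using 1
    ring

theorem mk_eq_sum_eval_boolPoint_mul_boolIndicator (p : MvPolynomial σ R) :
    Ideal.Quotient.mk (booleanIdeal σ R) p =
      ∑ S : Finset σ,
        Ideal.Quotient.mk (booleanIdeal σ R) (C (eval (boolPoint S) p) * boolIndicator S) := by
  set mk := Ideal.Quotient.mk (booleanIdeal σ R)
  induction p using MvPolynomial.induction_on with
  | C a =>
    simp only [eval_C]
    rw [← map_sum, ← mul_sum, sum_boolIndicator, mul_one]
  | add p q hp hq =>
    rw [map_add, hp, hq, ← sum_add_distrib]
    refine sum_congr rfl fun S _ => ?_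
    rw [← map_add, ← add_mul, ← C_add, ← map_add]
  | mul_X p i hp =>
    rw [map_mul, hp, sum_mul]
    refine sum_congr rfl fun S _ => ?_
    calc mk (C (eval (boolPoint S) p) * boolIndicator S) * mk (X i)
        = mk (C (eval (boolPoint S) p)) * mk (X i * boolIndicator S) := by
          rw [← map_mul, ← map_mul, mul_assoc, mul_comm (boolIndicator S)]
      _ = mk (C (eval (boolPoint S) (p * X i)) * boolIndicator S) := by
          rw [mk_X_mul_boolIndicator, ← map_mul, eval_mul, eval_X, C_mul, mul_assoc]

theorem mem_booleanIdeal_of_forall_eval_boolPoint_eq_zero {p : MvPolynomial σ R}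
    (h : ∀ S : Finset σ, eval (boolPoint S) p = 0) : p ∈ booleanIdeal σ R := by
  rw [← Ideal.Quotient.eq_zero_iff_mem, mk_eq_sum_eval_boolPoint_mul_boolIndicator]
  simp [h]

end BooleanIdeal

section Delta

variable {n : ℕ}

theorem I01_eq_booleanIdeal : I01 n = booleanIdeal (Fin n) ℝ := rfl

theorem eval_boolPoint_delta {Z I : Finset (Fin n)} (hIZ : I ⊆ Z) (S : Finset (Fin n)) :
    eval (boolPoint S) (delta n Z I) = if Z ∩ S = I then 1 else 0 := by
  have hT : Z ∩ S = I ↔ (∀ i ∈ I, i ∈ S) ∧ ∀ j ∈ Z \ I, j ∉ S := by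
    simp only [Finset.ext_iff, mem_inter, mem_sdiff]
    grind
  have hsub (j : Fin n) : 1 - boolPoint S j = (if j ∉ S then 1 else 0 : ℝ) := by
    unfold boolPoint
    split_ifs <;> simp
  simp only [delta, map_mul, map_prod, eval_X, map_sub, map_one, hsub]
  simp only [boolPoint]
  rw [prod_boole, prod_boole, ite_zero_mul_ite_zero, mul_one]
  convert if_congr hT.symm rfl rfl

theorem sum_powersetCard_eval_boolPoint_delta (V S : Finset (Fin n)) (k : ℕ) :
    ∑ I ∈ powersetCard k V, eval (boolPoint S) (delta n V I) =
      if #(V ∩ S) = k then 1 else 0 := by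
  rw [sum_congr rfl fun I hI => eval_boolPoint_delta (mem_powersetCard.1 hI).1 S, sum_ite_eq]
  simp [mem_powersetCard, inter_subset_left]

theorem sum_eval_boolPoint_delta_singleton_mul (V S : Finset (Fin n)) (f : Fin n → ℝ) :
    ∑ i ∈ V, eval (boolPoint S) (delta n V {i}) * f i =
      if #(V ∩ S) = 1 then ∑ i ∈ V ∩ S, f i else 0 := by
  rw [sum_congr rfl fun i hi => by rw [eval_boolPoint_delta (singleton_subset_iff.2 hi)]]
  split_ifs with h
  · obtain ⟨i₀, hi₀⟩ := card_eq_one.1 h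
    have hi₀V : i₀ ∈ V := mem_of_mem_inter_left (hi₀ ▸ mem_singleton_self i₀)
    simp [hi₀, hi₀V]
  · refine sum_eq_zero fun i _ => ?_
    rw [if_neg fun h' => h (by rw [h', card_singleton]), zero_mul]

theorem sum_boolPoint_eq_add_add_card (hn : 2 ≤ n) (S : Finset (Fin n)) :
    ∑ j, (boolPoint S j : ℝ) = boolPoint S ⟨0, by omega⟩ + boolPoint S ⟨1, by omega⟩ +
      #(univ.filter (fun i : Fin n => 2 ≤ i.val) ∩ S) := by
  have hlow : ({i | ¬ 2 ≤ i.val} : Finset (Fin n)) = {⟨0, by omega⟩, ⟨1, by omega⟩} := by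
    ext ⟨i, hi⟩
    simp only [mem_filter, mem_univ, true_and, mem_insert, mem_singleton, Fin.mk.injEq]
    omega
  rw [← sum_filter_add_sum_filter_not univ (fun i : Fin n => 2 ≤ i.val), hlow, sum_boolPoint,
    sum_pair (by simp)]
  ring

end Delta

/-- Explicit certificate for the full-circulant pitch-2 inequality.
Variables are indexed by `Fin n` (so `x_1` is `X ⟨0, _⟩`, `x_2` is `X ⟨1, _⟩`,
and `V = {3, …, n}` is the set of indices with value `≥ 2`). -/
theorem full_circulant_pitch_two_certificate (n : ℕ) (hn : 3 ≤ n) :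
    ∀ (e₁ e₂ : Fin n), e₁ = ⟨0, by omega⟩ → e₂ = ⟨1, by omega⟩ →
    ∀ (V : Finset (Fin n)), V = Finset.univ.filter (fun i => 2 ≤ i.val) →
    ∀ (g : Fin n → MvPolynomial (Fin n) ℝ),
      (g = fun i => (∑ j ∈ Finset.univ \ {i}, X j) - 1) →
    (∑ j, X j) - 2 -
      (delta n V ∅ * (g e₁ + g e₂) +
       (∑ i ∈ V, delta n V {i} * g i) +
       ∑ k ∈ Finset.Icc 2 n,
         (∑ I ∈ Finset.powersetCard k V, delta n V I) *
           (X e₁ + X e₂ + C ((k : ℝ) - 2))) ∈ I01 n := by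
  intro e₁ e₂ rfl rfl V hV g rfl
  rw [I01_eq_booleanIdeal]
  refine mem_booleanIdeal_of_forall_eval_boolPoint_eq_zero fun S => ?_
  have hsum := sum_boolPoint_eq_add_add_card (by omega) S
  rw [← hV] at hsum
  have hVS : ∀ i ∈ V ∩ S, boolPoint S i = (1 : ℝ) :=
    fun i hi => if_pos (mem_of_mem_inter_right hi)
  have ht : #(V ∩ S) ≤ n := (card_le_univ _).trans_eq (Fintype.card_fin n)
  simp only [map_sub, map_add, map_mul, map_sum, eval_X, eval_C, map_one, map_ofNat,
    eval_boolPoint_delta (empty_subset V), sum_eval_boolPoint_delta_singleton_mul,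
    sum_powersetCard_eval_boolPoint_delta, ite_mul, one_mul, zero_mul, sum_ite_eq,
    sum_sdiff_eq_sub (subset_univ _), sum_singleton, hsum]
  rw [sum_congr rfl fun i hi => by rw [hVS i hi]]
  simp only [← card_eq_zero, sum_const, nsmul_eq_mul]
  generalize #(V ∩ S) = t at ht ⊢
  obtain rfl | rfl | ht2 : t = 0 ∨ t = 1 ∨ 2 ≤ t := by omega
  · rw [if_pos rfl, if_neg zero_ne_one, if_neg (by simp)]
    push_cast
    ring
  · rw [if_neg one_ne_zero, if_pos rfl, if_neg (by simp)]
    push_cast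
    ring
  · rw [if_neg (by omega), if_neg (by omega), if_pos (mem_Icc.2 ⟨ht2, ht⟩)]
    ring
end
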